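/- With notation as before: if E ⊆ A* is consistent and ε ∈ E, then for all distributions v₁, v₂ ∈ D(Q), v₁ ≡_E v₂ implies obs(v₁) = obs(v₂) (i.e., v₁ and v₂ accept the same probabilistic language on all of A*). -/
import Mathlib


/-- The language map of a probabilistic automaton extended convex-linearly. -/
noncomputable def obs {Q A : Type*} [Fintype Q] (out : Q → ℝ) (δ : Q → A → Q → ℝ) :
    (Q → ℝ) → List A → ℝ
  | v, [] => ∑ q, v q * out q
  | v, a :: w => obs out δ (fun q' => ∑ q, v q * δ q a q') w

/-- v is a probability distribution on the finite set Q. -/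
def IsDist {Q : Type*} [Fintype Q] (v : Q → ℝ) : Prop :=
  (∀ q, 0 ≤ v q) ∧ (∑ q, v q) = 1

/-- AE = {a·e | a ∈ A, e ∈ E}. -/
def wordStep {A : Type*} (E : Set (List A)) : Set (List A) :=
  {w | ∃ (a : A) (e : List A), e ∈ E ∧ w = a :: e}


lemma step_isDist {Q A : Type*} [Fintype Q] (δ : Q → A → Q → ℝ)
    (hδ : ∀ q a, IsDist (δ q a)) (v : Q → ℝ) (hv : IsDist v) (a : A) :
    IsDist (fun q' => ∑ q, v q * δ q a q') := by
  constructor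
  · intro q'
    exact Finset.sum_nonneg fun q _ => mul_nonneg (hv.1 q) ((hδ q a).1 q')
  · rw [Finset.sum_comm]
    calc (∑ q, ∑ q', v q * δ q a q') = ∑ q, v q * ∑ q', δ q a q' := by
          simp [Finset.mul_sum]
      _ = 1 := by simp [(hδ · a |>.2), hv.2]

/-- If E is consistent and contains ε, then agreement on E implies language
equality (agreement on all of A*). -/
theorem consistent_epsilon_implies_language_equal
    {Q A : Type*} [Fintype Q] (out : Q → ℝ) (δ : Q → A → Q → ℝ)
    (hout : ∀ q, out q ∈ Set.Icc (0:ℝ) 1)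
    (hδ : ∀ q a, IsDist (δ q a))
    (E : Set (List A)) (hε : ([] : List A) ∈ E)
    (hE : ∀ v₁ v₂ : Q → ℝ, IsDist v₁ → IsDist v₂ →
      (∀ e ∈ E, obs out δ v₁ e = obs out δ v₂ e) →
      (∀ e ∈ wordStep E, obs out δ v₁ e = obs out δ v₂ e))
    (v₁ v₂ : Q → ℝ) (hv₁ : IsDist v₁) (hv₂ : IsDist v₂)
    (heq : ∀ e ∈ E, obs out δ v₁ e = obs out δ v₂ e) :
    obs out δ v₁ = obs out δ v₂ := by
  funext w
  induction w generalizing v₁ v₂ with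
  | nil => exact heq [] hε
  | cons a w ih =>
    show obs out δ (fun q' => ∑ q, v₁ q * δ q a q') w
       = obs out δ (fun q' => ∑ q, v₂ q * δ q a q') w
    exact ih _ _ (step_isDist δ hδ v₁ hv₁ a) (step_isDist δ hδ v₂ hv₂ a)
      (fun e he => hE v₁ v₂ hv₁ hv₂ heq (a :: e) ⟨a, e, he, rfl⟩)
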